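/- arXiv:1801.01924 — 4 statements merged into one kernel-verified Lean document; each statement's English description precedes it below -/
import Mathlib

section
/- Theorem 3.3. Assume the block Jacobi operator J is self-adjoint and bounded from below, that ker A_m = {0} for all m ∈ ℕ, and let b ∈ ℝ be such that there exists a compact self-adjoint operator K₀ on H with ⟨(J−K₀)u,u⟩ ≥ b‖u‖² for all u ∈ dom J (i.e. the essential spectrum of J lies in [b,∞)). Fix δ > 0 and ε ∈ (0,1), and let λ < b be a real eigenvalue of J with eigenvector u ∈ dom J, Ju = λu, normalized so that ‖u‖ = 1. Then there is a constant C, independent of m, such that for all m ∈ ℕ: ‖u_m‖_K ≤ C·exp(−γ(λ)·Σ_{k=1}^{m−1} φ_δ(‖A_k‖_{B(K)})). -/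
noncomputable section

open scoped InnerProductSpace ENNReal

/-- The function `ψ(x) = x² eˣ`. -/
def psiFun (x : ℝ) : ℝ := x ^ 2 * Real.exp x

/-- The inverse function of `ψ` on `[0,∞)`. -/
def psiInv (t : ℝ) : ℝ := sInf {x : ℝ | 0 ≤ x ∧ psiFun x = t}

/-- The function `φ_δ`: `1/√δ` on `[0,δ)` and `1/√x` on `[δ,∞)`. -/
def phiFun (δ x : ℝ) : ℝ := if x < δ then 1 / Real.sqrt δ else 1 / Real.sqrt x

/-- `γ(λ) = √δ · ψ⁻¹((b − Re λ)(1−ε)/δ)`. -/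
def gammaFun (δ ε b relam : ℝ) : ℝ := Real.sqrt δ * psiInv ((b - relam) * (1 - ε) / δ)

variable {K : Type*} [NormedAddCommGroup K] [InnerProductSpace ℂ K] [CompleteSpace K]

/-- A sequence in `ℓ²(ℕ,K)` is finitely supported. -/
def IsFinSupp (u : lp (fun _ : ℕ => K) 2) : Prop := Set.Finite {n | u n ≠ 0}

/-- The formal block Jacobi action (indices starting at `0`):
`(Υu)₀ = B₀u₀ + A₀u₁` and `(Υu)_{k+1} = A*_k u_k + B_{k+1} u_{k+1} + A_{k+1} u_{k+2}`. -/
def jacApply (A B : ℕ → K →L[ℂ] K) (v : ℕ → K) : ℕ → K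
  | 0 => B 0 (v 0) + A 0 (v 1)
  | k + 1 =>
      ContinuousLinearMap.adjoint (A k) (v k) + B (k + 1) (v (k + 1)) + A (k + 1) (v (k + 2))

/-- `J` is the block Jacobi operator with entries `A`, `B`: every finitely supported sequence
belongs to its domain, it acts on those by the block Jacobi difference expression, and it is
the closure of its restriction to the finitely supported sequences (i.e. its graph is contained
in the closure of the graph of `J₀`). -/
structure IsBlockJacobi (J : lp (fun _ : ℕ => K) 2 →ₗ.[ℂ] lp (fun _ : ℕ => K) 2)
    (A B : ℕ → K →L[ℂ] K) : Prop where
  dom_fin : ∀ u : lp (fun _ : ℕ => K) 2, IsFinSupp u → u ∈ J.domain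
  apply_fin : ∀ (u : lp (fun _ : ℕ => K) 2) (hu : u ∈ J.domain), IsFinSupp u →
    ∀ n, (J ⟨u, hu⟩) n = jacApply A B (fun m => u m) n
  isClosure : ∀ u : J.domain, ((u : lp (fun _ : ℕ => K) 2), J u) ∈
    closure {p : lp (fun _ : ℕ => K) 2 × lp (fun _ : ℕ => K) 2 |
      ∃ h1 : p.1 ∈ J.domain, IsFinSupp p.1 ∧ J ⟨p.1, h1⟩ = p.2}

/-- `R` is an everywhere-defined bounded inverse of `J − λI`; the existence of such an `R`
says precisely that `λ ∉ σ(J)`. -/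
def IsResolventAt (J : lp (fun _ : ℕ => K) 2 →ₗ.[ℂ] lp (fun _ : ℕ => K) 2) (lam : ℂ)
    (R : lp (fun _ : ℕ => K) 2 →L[ℂ] lp (fun _ : ℕ => K) 2) : Prop :=
  (∀ u : J.domain, R (J u - lam • (u : lp (fun _ : ℕ => K) 2)) = u) ∧
  (∀ v : lp (fun _ : ℕ => K) 2, ∃ hv : R v ∈ J.domain, J ⟨R v, hv⟩ - lam • (R v) = v)

/-- `J` is bounded from below. -/
def IsBoundedBelowOp (J : lp (fun _ : ℕ => K) 2 →ₗ.[ℂ] lp (fun _ : ℕ => K) 2) : Prop :=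
  ∃ c : ℝ, ∀ u : J.domain,
    c * ‖(u : lp (fun _ : ℕ => K) 2)‖ ^ 2 ≤ (⟪J u, (u : lp (fun _ : ℕ => K) 2)⟫_ℂ).re

/-- The essential spectrum of `J` lies in `[b,∞)`: there is a compact self-adjoint operator `K₀`
with `⟨(J−K₀)u,u⟩ ≥ b‖u‖²` on the domain of `J`. -/
def EssSpecFrom (J : lp (fun _ : ℕ => K) 2 →ₗ.[ℂ] lp (fun _ : ℕ => K) 2) (b : ℝ) : Prop :=
  ∃ K₀ : lp (fun _ : ℕ => K) 2 →L[ℂ] lp (fun _ : ℕ => K) 2,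
    IsCompactOperator K₀ ∧ IsSelfAdjoint K₀ ∧
    ∀ u : J.domain, b * ‖(u : lp (fun _ : ℕ => K) 2)‖ ^ 2 ≤
      (⟪J u - K₀ (u : lp (fun _ : ℕ => K) 2), (u : lp (fun _ : ℕ => K) 2)⟫_ℂ).re

/-!
Agmon-type estimate with truncated exponential weights. Let `F m = γ ∑_{k<m} φ_δ(‖A_k‖)` and
`c_n = exp (min F n)`, a bounded weight. Summation by parts gives, for finitely supported `w`,
`Re ⟪J (c w), c w⟫ = Re ⟪c (J w), c w⟫ - ∑ (c_{k+1} - c_k)² Re ⟪A_k w_{k+1}, w_k⟫`, and `γ` is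
chosen through `ψ(x) = x² eˣ` exactly so that `(c_{k+1} - c_k)² ‖A_k‖ ≤ (1-ε)(b-λ) c_k c_{k+1}`;
the error term is then at most `(1-ε)(b-λ) ‖c w‖²`. Since `J` is the closure of its restriction
to finitely supported sequences, combining this with `⟪(J - K₀) v, v⟫ ≥ b ‖v‖²` and `J u = λ u`
yields `ε (b-λ) ‖c_n u‖² ≤ -Re ⟪K₀ (c_n u), c_n u⟫` for every `n`. If `‖c_n u‖` were unbounded,
the normalised vectors `c_n u / ‖c_n u‖` would tend to zero coordinatewise, hence weakly, and the
compactness of `K₀` would make the right-hand side tend to zero along a subsequence. So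
`‖c_n u‖ ≤ C` for all `n`, which at `n ≥ F m` reads `e^{F m} ‖u_m‖ ≤ C`.
-/

open Filter Topology Finset

local notation "ℓ²(" E ")" => lp (fun _ : ℕ => E) 2

lemma continuous_psiFun : Continuous psiFun := by
  unfold psiFun; fun_prop

lemma psiInv_mem {q : ℝ} (hq : 0 ≤ q) : psiInv q ∈ {x : ℝ | 0 ≤ x ∧ psiFun x = q} := by
  have hq_le : q ≤ psiFun (max 1 q) := by
    have h1 : 1 ≤ max 1 q := le_max_left _ _
    calc q ≤ max 1 q := le_max_right _ _
      _ ≤ max 1 q ^ 2 * 1 := by nlinarith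
      _ ≤ psiFun (max 1 q) := by
        unfold psiFun; gcongr; exact Real.one_le_exp (by positivity)
  obtain ⟨x, hx, hxq⟩ := intermediate_value_Icc (by positivity : (0 : ℝ) ≤ max 1 q)
    continuous_psiFun.continuousOn ⟨by simpa [psiFun] using hq, hq_le⟩
  have hclosed : IsClosed {x : ℝ | 0 ≤ x ∧ psiFun x = q} :=
    isClosed_Ici.inter (isClosed_eq continuous_psiFun continuous_const)
  exact hclosed.csInf_mem ⟨x, hx.1, hxq⟩ ⟨0, fun _ hy => hy.1⟩

lemma phiFun_nonneg (δ x : ℝ) : 0 ≤ phiFun δ x := by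
  unfold phiFun; split <;> positivity

lemma sqrt_mul_phiFun_le_one {δ : ℝ} (hδ : 0 < δ) (x : ℝ) : √δ * phiFun δ x ≤ 1 := by
  unfold phiFun
  split_ifs with hx
  · rw [mul_one_div_cancel (Real.sqrt_pos.2 hδ).ne']
  · rw [mul_one_div, div_le_one (Real.sqrt_pos.2 (hδ.trans_le (not_lt.1 hx)))]
    exact Real.sqrt_le_sqrt (not_lt.1 hx)

lemma mul_sq_sqrt_mul_phiFun_le {δ : ℝ} (hδ : 0 < δ) (x : ℝ) :
    x * (√δ * phiFun δ x) ^ 2 ≤ δ := by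
  unfold phiFun
  split_ifs with hxδ
  · rw [mul_one_div_cancel (Real.sqrt_pos.2 hδ).ne']; linarith
  · have hx0 : 0 < x := hδ.trans_le (not_lt.1 hxδ)
    rw [mul_one_div, div_pow, Real.sq_sqrt hδ.le, Real.sq_sqrt hx0.le, mul_div_cancel₀ _ hx0.ne']

lemma gammaFun_arg_nonneg {δ ε b lam : ℝ} (hδ : 0 < δ) (hε : ε < 1) (hlam : lam < b) :
    0 ≤ (b - lam) * (1 - ε) / δ :=
  div_nonneg (mul_nonneg (sub_nonneg.2 hlam.le) (sub_nonneg.2 hε.le)) hδ.le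

lemma gammaFun_nonneg {δ ε b lam : ℝ} (hδ : 0 < δ) (hε : ε < 1) (hlam : lam < b) :
    0 ≤ gammaFun δ ε b lam :=
  mul_nonneg (Real.sqrt_nonneg _) (psiInv_mem (gammaFun_arg_nonneg hδ hε hlam)).1

lemma mul_sq_mul_exp_le_of_le_gammaFun_mul_phiFun {δ ε b lam x s : ℝ} (hδ : 0 < δ) (hε : ε < 1)
    (hlam : lam < b) (hx : 0 ≤ x) (hs : 0 ≤ s) (hsγ : s ≤ gammaFun δ ε b lam * phiFun δ x) :
    x * s ^ 2 * Real.exp s ≤ (1 - ε) * (b - lam) := by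
  obtain ⟨ht, hψ⟩ := psiInv_mem (gammaFun_arg_nonneg hδ hε hlam)
  set t := psiInv ((b - lam) * (1 - ε) / δ)
  set a := √δ * phiFun δ x
  have hsta : s ≤ t * a := by rw [gammaFun] at hsγ; linarith [mul_comm (√δ) t]
  have hst : s ≤ t := hsta.trans (mul_le_of_le_one_right ht (sqrt_mul_phiFun_le_one hδ x))
  calc x * s ^ 2 * Real.exp s ≤ x * (t * a) ^ 2 * Real.exp t := by
        have ha : 0 ≤ a := mul_nonneg (Real.sqrt_nonneg _) (phiFun_nonneg _ _)
        gcongr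
    _ = (x * a ^ 2) * (t ^ 2 * Real.exp t) := by ring
    _ ≤ δ * (t ^ 2 * Real.exp t) := by gcongr; exact mul_sq_sqrt_mul_phiFun_le hδ x
    _ = (1 - ε) * (b - lam) := by rw [← psiFun, hψ]; field_simp

lemma exp_sub_one_le_mul_exp (s : ℝ) : Real.exp s - 1 ≤ s * Real.exp s := by
  have h := mul_le_mul_of_nonneg_right (Real.one_sub_le_exp_neg s) (Real.exp_pos s).le
  rw [← Real.exp_add, neg_add_cancel, Real.exp_zero] at h
  linarith

lemma sq_exp_sub_exp_mul_le {t t' x M : ℝ} (htt' : t ≤ t') (hx : 0 ≤ x)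
    (h : x * (t' - t) ^ 2 * Real.exp (t' - t) ≤ M) :
    (Real.exp t' - Real.exp t) ^ 2 * x ≤ M * (Real.exp t * Real.exp t') := by
  set s := t' - t
  have ht' : Real.exp t' = Real.exp t * Real.exp s := by rw [← Real.exp_add, add_sub_cancel]
  have hs : 0 ≤ Real.exp s - 1 := by linarith [Real.add_one_le_exp s, sub_nonneg.2 htt']
  have hsq : (Real.exp s - 1) ^ 2 ≤ s ^ 2 * Real.exp s * Real.exp s := by
    nlinarith [exp_sub_one_le_mul_exp s]
  rw [ht']
  calc (Real.exp t * Real.exp s - Real.exp t) ^ 2 * x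
      = Real.exp t ^ 2 * (x * (Real.exp s - 1) ^ 2) := by ring
    _ ≤ Real.exp t ^ 2 * (x * (s ^ 2 * Real.exp s * Real.exp s)) := by gcongr
    _ = Real.exp t ^ 2 * ((x * s ^ 2 * Real.exp s) * Real.exp s) := by ring
    _ ≤ Real.exp t ^ 2 * (M * Real.exp s) := by gcongr
    _ = M * (Real.exp t * (Real.exp t * Real.exp s)) := by ring

lemma sq_exp_min_sub_exp_min_mul_le {δ ε b lam x t t' : ℝ} (hδ : 0 < δ) (hε : ε < 1)
    (hlam : lam < b) (hx : 0 ≤ x) (hstep : t' = t + gammaFun δ ε b lam * phiFun δ x) (n : ℝ) :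
    (Real.exp (min t' n) - Real.exp (min t n)) ^ 2 * x ≤
      (1 - ε) * (b - lam) * (Real.exp (min t n) * Real.exp (min t' n)) := by
  have htt' : t ≤ t' := by
    rw [hstep]
    exact le_add_of_nonneg_right (mul_nonneg (gammaFun_nonneg hδ hε hlam) (phiFun_nonneg _ _))
  have hmono : min t n ≤ min t' n := min_le_min_right n htt'
  have hlip : min t' n - min t n ≤ t' - t := by
    simp only [min_def]; split_ifs <;> linarith
  exact sq_exp_sub_exp_mul_le hmono hx (mul_sq_mul_exp_le_of_le_gammaFun_mul_phiFun hδ hε hlam hx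
    (sub_nonneg.2 hmono) (hlip.trans (by rw [hstep, add_sub_cancel_left])))

lemma sum_range_mul_succ_le_sum_sq (a : ℕ → ℝ) (N : ℕ) :
    ∑ k ∈ range N, a k * a (k + 1) ≤ ∑ k ∈ range (N + 1), a k ^ 2 := by
  have hsucc := sum_range_succ (fun k => a k ^ 2) N
  have hsucc' := sum_range_succ' (fun k => a k ^ 2) N
  calc ∑ k ∈ range N, a k * a (k + 1) ≤ ∑ k ∈ range N, (a k ^ 2 + a (k + 1) ^ 2) / 2 :=
        sum_le_sum fun k _ => by nlinarith [sq_nonneg (a k - a (k + 1))]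
    _ ≤ ∑ k ∈ range (N + 1), a k ^ 2 := by
        rw [← sum_div, sum_add_distrib]; nlinarith [sq_nonneg (a N), sq_nonneg (a 0)]

namespace lp

section DiagMul

variable {α 𝕜 : Type*} {E : α → Type*} [RCLike 𝕜] [∀ i, NormedAddCommGroup (E i)]
  [∀ i, NormedSpace 𝕜 (E i)] {p : ℝ≥0∞} [Fact (1 ≤ p)]

def diagMul (c : α → 𝕜) {C : ℝ} (hc : ∀ i, ‖c i‖ ≤ C) : lp E p →L[𝕜] lp E p :=
  LinearMap.mkContinuous
    { toFun := fun f => ⟨fun i => c i • f i, (lp.memℓp f).norm.const_mul C |>.mono fun i =>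
          (norm_smul_le _ _).trans (mul_le_mul_of_nonneg_right (hc i) (norm_nonneg _))⟩
      map_add' := fun f g => by ext i; exact smul_add _ _ _
      map_smul' := fun a f => by ext i; exact smul_comm _ _ _ }
    |C| fun f => calc
      _ ≤ ‖(C : 𝕜) • f‖ := lp.norm_mono (zero_lt_one.trans_le Fact.out).ne' fun i => by
        simp only [LinearMap.coe_mk, AddHom.coe_mk, coeFn_smul, Pi.smul_apply, norm_smul,
          RCLike.norm_ofReal]
        exact mul_le_mul_of_nonneg_right ((hc i).trans (le_abs_self C)) (norm_nonneg _)
      _ = |C| * ‖f‖ := by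
        rw [norm_const_smul (zero_lt_one.trans_le Fact.out).ne', RCLike.norm_ofReal]

@[simp]
lemma diagMul_apply (c : α → 𝕜) {C : ℝ} (hc : ∀ i, ‖c i‖ ≤ C) (f : lp E p) (i : α) :
    diagMul c hc f i = c i • f i := rfl

end DiagMul

lemma sum_norm_sq_le {ι : Type*} {G : ι → Type*} [∀ i, NormedAddCommGroup (G i)]
    (f : lp G 2) (s : Finset ι) : ∑ i ∈ s, ‖f i‖ ^ 2 ≤ ‖f‖ ^ 2 := by
  simpa using lp.sum_rpow_le_norm_rpow (p := 2) (by norm_num) f s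

end lp

section TruncatedExpWeight

variable {E : Type*} [NormedAddCommGroup E] [NormedSpace ℂ E]

lemma norm_ofReal_exp_min_le (F : ℕ → ℝ) (n k : ℕ) :
    ‖((Real.exp (min (F k) n) : ℝ) : ℂ)‖ ≤ Real.exp n := by
  rw [Complex.norm_real, Real.norm_of_nonneg (Real.exp_pos _).le]
  exact Real.exp_le_exp.2 (min_le_right _ _)

def truncExpWeight (F : ℕ → ℝ) (n : ℕ) : ℓ²(E) →L[ℂ] ℓ²(E) :=
  lp.diagMul (fun k => ((Real.exp (min (F k) n) : ℝ) : ℂ)) (norm_ofReal_exp_min_le F n)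

lemma norm_truncExpWeight_apply (F : ℕ → ℝ) (n : ℕ) (f : ℓ²(E)) (k : ℕ) :
    ‖truncExpWeight F n f k‖ = Real.exp (min (F k) n) * ‖f k‖ := by
  rw [truncExpWeight, lp.diagMul_apply, norm_smul, Complex.norm_real,
    Real.norm_of_nonneg (Real.exp_pos _).le]

lemma bddAbove_norm_truncExpWeight_apply (F : ℕ → ℝ) (f : ℓ²(E)) (k : ℕ) :
    BddAbove (Set.range fun n => ‖truncExpWeight F n f k‖) :=
  ⟨Real.exp (F k) * ‖f k‖, by
    rintro _ ⟨n, rfl⟩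
    dsimp only
    rw [norm_truncExpWeight_apply]
    gcongr
    exact min_le_left _ _⟩

lemma norm_apply_le_of_forall_norm_truncExpWeight_le {F : ℕ → ℝ} {f : ℓ²(E)} {C : ℝ}
    (hC : ∀ n, ‖truncExpWeight F n f‖ ≤ C) (m : ℕ) : ‖f m‖ ≤ C * Real.exp (-F m) := by
  have hm := (lp.norm_apply_le_norm two_ne_zero _ m).trans (hC ⌈F m⌉₊)
  rw [norm_truncExpWeight_apply, min_eq_left (Nat.le_ceil _)] at hm
  calc ‖f m‖ = Real.exp (-F m) * (Real.exp (F m) * ‖f m‖) := by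
        rw [← mul_assoc, ← Real.exp_add, neg_add_cancel, Real.exp_zero, one_mul]
    _ ≤ Real.exp (-F m) * C := by gcongr
    _ = C * Real.exp (-F m) := mul_comm _ _

end TruncatedExpWeight

section Compact

variable {𝕜 : Type*} [RCLike 𝕜]

lemma lp.tendsto_inner_zero_of_tendsto_apply {ι : Type*} {G : ι → Type*}
    [∀ i, NormedAddCommGroup (G i)] [∀ i, InnerProductSpace 𝕜 (G i)] {z : ℕ → lp G 2} {R : ℝ}
    (hz : ∀ j, ‖z j‖ ≤ R) (hz0 : ∀ i, Tendsto (fun j => z j i) atTop (𝓝 0)) (y : lp G 2) :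
    Tendsto (fun j => ⟪y, z j⟫_𝕜) atTop (𝓝 0) := by
  classical
  have hequi : Equicontinuous fun j (x : lp G 2) => ⟪x, z j⟫_𝕜 :=
    (LipschitzWith.uniformEquicontinuous _ R.toNNReal fun j =>
      LipschitzWith.of_dist_le_mul fun x x' => by
        rw [dist_eq_norm, dist_eq_norm, ← inner_sub_left]
        exact (norm_inner_le_norm _ _).trans (by
          rw [mul_comm]; gcongr; exact (hz j).trans (Real.le_coe_toNNReal R))).equicontinuous
  -- the set of `y` along which the claim holds is closed and contains the finite sums of singles
  have hclosed := hequi.isClosed_setOfPred_tendsto (l := atTop) (continuous_const (y := (0 : 𝕜)))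
  refine hclosed.mem_of_tendsto (lp.hasSum_single ENNReal.ofNat_ne_top y)
    (Eventually.of_forall fun s => ?_)
  simp only [Set.mem_ofPred_eq, sum_inner, lp.inner_single_left]
  simpa using tendsto_finsetSum s fun i _ => (tendsto_const_nhds (x := y i)).inner (hz0 i) (𝕜 := 𝕜)

lemma IsCompactOperator.exists_tendsto_inner_self_zero {E : Type*} [NormedAddCommGroup E]
    [InnerProductSpace 𝕜 E] {T : E →L[𝕜] E} (hT : IsCompactOperator T) {z : ℕ → E} {R : ℝ}
    (hz : ∀ j, ‖z j‖ ≤ R) (hweak : ∀ y, Tendsto (fun j => ⟪y, z j⟫_𝕜) atTop (𝓝 0)) :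
    ∃ φ : ℕ → ℕ, StrictMono φ ∧ Tendsto (fun j => ⟪T (z (φ j)), z (φ j)⟫_𝕜) atTop (𝓝 0) := by
  obtain ⟨S, hS, hTS⟩ := hT.image_closedBall_subset_compact (f := (T : E →ₗ[𝕜] E)) R
  obtain ⟨y, -, φ, hφ, hTy⟩ := hS.tendsto_subseq fun j =>
    hTS ⟨z j, mem_closedBall_zero_iff.2 (hz j), rfl⟩
  refine ⟨φ, hφ, ?_⟩
  have hnear : Tendsto (fun j => ⟪T (z (φ j)) - y, z (φ j)⟫_𝕜) atTop (𝓝 0) := by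
    refine squeeze_zero_norm (fun j => (norm_inner_le_norm _ _).trans
      (mul_le_mul_of_nonneg_left (hz (φ j)) (norm_nonneg _))) ?_
    simpa using (tendsto_iff_norm_sub_tendsto_zero.1 hTy).mul_const R
  simpa [inner_sub_left] using hnear.add ((hweak y).comp hφ.tendsto_atTop)

lemma re_inner_map_ofReal_smul_self {E : Type*} [NormedAddCommGroup E] [InnerProductSpace 𝕜 E]
    (T : E →L[𝕜] E) (r : ℝ) (x : E) :
    RCLike.re ⟪T ((r : 𝕜) • x), (r : 𝕜) • x⟫_𝕜 = r ^ 2 * RCLike.re ⟪T x, x⟫_𝕜 := by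
  simp [inner_smul_left, inner_smul_right, ← mul_assoc, pow_two]

lemma lp.exists_norm_le_of_compact_coercive {ι : Type*} {G : ι → Type*}
    [∀ i, NormedAddCommGroup (G i)] [∀ i, InnerProductSpace 𝕜 (G i)]
    {T : lp G 2 →L[𝕜] lp G 2} (hT : IsCompactOperator T) {a : ℝ} (ha : 0 < a)
    {v : ℕ → lp G 2} (hcoer : ∀ n, a * ‖v n‖ ^ 2 ≤ -RCLike.re ⟪T (v n), v n⟫_𝕜)
    (hcoord : ∀ i, BddAbove (Set.range fun n => ‖v n i‖)) :
    ∃ C, ∀ n, ‖v n‖ ≤ C := by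
  by_contra! hunb
  choose n hn using fun j : ℕ => hunb (j + 1)
  have hpos : ∀ j, 0 < ‖v (n j)‖ := fun j => (by positivity : (0 : ℝ) < j + 1).trans (hn j)
  set z : ℕ → lp G 2 := fun j => ((‖v (n j)‖⁻¹ : ℝ) : 𝕜) • v (n j)
  have hz1 : ∀ j, ‖z j‖ = 1 := fun j => by simp [z, norm_smul, (hpos j).ne']
  have hz0 : ∀ i, Tendsto (fun j => z j i) atTop (𝓝 0) := by
    intro i
    obtain ⟨B, hB⟩ := hcoord i
    refine squeeze_zero_norm (f := fun j => z j i) (a := fun j => B * ((j : ℝ) + 1)⁻¹)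
      (fun j => ?_) (by simpa using tendsto_one_div_add_atTop_nhds_zero_nat.const_mul B)
    simp only [z, lp.coeFn_smul, Pi.smul_apply, norm_smul, RCLike.norm_ofReal, abs_inv, abs_norm]
    rw [inv_mul_eq_div, div_le_iff₀ (hpos j)]
    have hvB : ‖v (n j) i‖ ≤ B := hB ⟨n j, rfl⟩
    have hj : 1 ≤ ((j : ℝ) + 1)⁻¹ * ‖v (n j)‖ := by
      rw [inv_mul_eq_div, one_le_div (by positivity)]; exact (hn j).le
    nlinarith [norm_nonneg (v (n j) i)]
  have hcoer_z : ∀ j, a ≤ -RCLike.re ⟪T (z j), z j⟫_𝕜 := fun j => by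
    rw [re_inner_map_ofReal_smul_self]
    calc a = ‖v (n j)‖⁻¹ ^ 2 * (a * ‖v (n j)‖ ^ 2) := by field_simp [(hpos j).ne']
      _ ≤ ‖v (n j)‖⁻¹ ^ 2 * -RCLike.re ⟪T (v (n j)), v (n j)⟫_𝕜 := by gcongr; exact hcoer (n j)
      _ = _ := by ring
  obtain ⟨φ, hφ, hlim⟩ := hT.exists_tendsto_inner_self_zero (fun j => (hz1 j).le)
    (lp.tendsto_inner_zero_of_tendsto_apply (fun j => (hz1 j).le) hz0)
  have : a ≤ 0 := ge_of_tendsto (by simpa using (RCLike.continuous_re.tendsto _).comp hlim |>.neg)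
    (Eventually.of_forall fun j => hcoer_z (φ j))
  linarith

end Compact

lemma tsum_inner_jacApply (A B : ℕ → K →L[ℂ] K) {v : ℕ → K} {N : ℕ}
    (hv : ∀ k, N ≤ k → v k = 0) (g : ℕ → K) :
    ∑' k, ⟪jacApply A B v k, g k⟫_ℂ = ∑ k ∈ range N,
      (⟪B k (v k), g k⟫_ℂ + ⟪A k (v (k + 1)), g k⟫_ℂ + ⟪v k, A k (g (k + 1))⟫_ℂ) := by
  set P : ℕ → ℂ := fun k => ⟪B k (v k), g k⟫_ℂ + ⟪A k (v (k + 1)), g k⟫_ℂ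
  set Q : ℕ → ℂ := fun k => ⟪v k, A k (g (k + 1))⟫_ℂ
  have hjac_zero : ⟪jacApply A B v 0, g 0⟫_ℂ = P 0 := by simp [P, jacApply]
  have hjac_succ : ∀ k, ⟪jacApply A B v (k + 1), g (k + 1)⟫_ℂ = Q k + P (k + 1) := fun k => by
    simp [P, Q, jacApply, ContinuousLinearMap.adjoint_inner_left, add_assoc]
  have hP : ∀ k, N ≤ k → P k = 0 := fun k hk => by simp [P, hv k hk, hv (k + 1) (by omega)]
  have hQ : ∀ k, N ≤ k → Q k = 0 := fun k hk => by simp [Q, hv k hk]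
  rw [tsum_eq_sum (s := range (N + 1)) fun k hk => by
    obtain ⟨k, rfl⟩ := Nat.exists_eq_add_one.2 (show 0 < k by simp at hk; omega)
    rw [hjac_succ, hQ k (by simp at hk; omega), hP _ (by simp at hk; omega), add_zero]]
  rw [sum_range_succ', hjac_zero]
  simp only [hjac_succ, sum_add_distrib]
  rw [add_assoc, ← sum_range_succ' P, sum_range_succ, hP N le_rfl, add_zero, add_comm]
  simp only [P, Q, sum_add_distrib]

lemma re_tsum_inner_jacApply_smul (A B : ℕ → K →L[ℂ] K) (c : ℕ → ℝ) {v : ℕ → K} {N : ℕ}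
    (hv : ∀ k, N ≤ k → v k = 0) :
    (∑' k, ⟪jacApply A B (fun k => (c k : ℂ) • v k) k, (c k : ℂ) • v k⟫_ℂ).re =
      (∑' k, ⟪(c k : ℂ) • jacApply A B v k, (c k : ℂ) • v k⟫_ℂ).re -
        ∑ k ∈ range N, (c (k + 1) - c k) ^ 2 * (⟪A k (v (k + 1)), v k⟫_ℂ).re := by
  have hcv : ∀ k, N ≤ k → (c k : ℂ) • v k = 0 := fun k hk => by rw [hv k hk, smul_zero]
  have hsq : ∀ k, ⟪(c k : ℂ) • jacApply A B v k, (c k : ℂ) • v k⟫_ℂ =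
      ⟪jacApply A B v k, ((c k ^ 2 : ℝ) : ℂ) • v k⟫_ℂ := fun k => by
    simp only [inner_smul_left, inner_smul_right, Complex.conj_ofReal]; push_cast; ring
  rw [tsum_inner_jacApply A B hcv, tsum_congr hsq, tsum_inner_jacApply A B hv, Complex.re_sum,
    Complex.re_sum, ← sum_sub_distrib]
  refine sum_congr rfl fun k _ => ?_
  simp only [map_smul, inner_smul_left, inner_smul_right, Complex.conj_ofReal, Complex.add_re,
    ← mul_assoc, ← Complex.ofReal_mul, Complex.re_ofReal_mul]
  rw [← inner_conj_symm (v k), Complex.conj_re]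
  ring

lemma neg_sum_jump_re_inner_le {E : Type*} [NormedAddCommGroup E] [InnerProductSpace ℂ E]
    (A : ℕ → E →L[ℂ] E) {c : ℕ → ℝ} {M : ℝ} (hM : 0 ≤ M)
    (hjump : ∀ k, (c (k + 1) - c k) ^ 2 * ‖A k‖ ≤ M * (c k * c (k + 1))) (v : ℕ → E) (N : ℕ) :
    -∑ k ∈ range N, (c (k + 1) - c k) ^ 2 * (⟪A k (v (k + 1)), v k⟫_ℂ).re ≤
      M * ∑ k ∈ range (N + 1), (c k * ‖v k‖) ^ 2 := by
  have hterm : ∀ k, -((c (k + 1) - c k) ^ 2 * (⟪A k (v (k + 1)), v k⟫_ℂ).re) ≤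
      M * ((c k * ‖v k‖) * (c (k + 1) * ‖v (k + 1)‖)) := fun k => calc
    _ ≤ (c (k + 1) - c k) ^ 2 * (‖A k‖ * ‖v (k + 1)‖ * ‖v k‖) := by
        rw [← mul_neg]
        gcongr
        exact (neg_le_abs _).trans ((Complex.abs_re_le_norm _).trans
          ((norm_inner_le_norm _ _).trans (by gcongr; exact (A k).le_opNorm _)))
    _ = ((c (k + 1) - c k) ^ 2 * ‖A k‖) * (‖v k‖ * ‖v (k + 1)‖) := by ring
    _ ≤ (M * (c k * c (k + 1))) * (‖v k‖ * ‖v (k + 1)‖) :=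
        mul_le_mul_of_nonneg_right (hjump k) (by positivity)
    _ = _ := by ring
  calc _ = ∑ k ∈ range N, -((c (k + 1) - c k) ^ 2 * (⟪A k (v (k + 1)), v k⟫_ℂ).re) :=
        (sum_neg_distrib _).symm
    _ ≤ M * ∑ k ∈ range N, (c k * ‖v k‖) * (c (k + 1) * ‖v (k + 1)‖) := by
        rw [mul_sum]; exact sum_le_sum fun k _ => hterm k
    _ ≤ _ := by gcongr; exact sum_range_mul_succ_le_sum_sq (fun k => c k * ‖v k‖) N

lemma IsFinSupp.exists_forall_ge_eq_zero {E : Type*} [NormedAddCommGroup E] {w : ℓ²(E)}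
    (hw : IsFinSupp w) : ∃ N, ∀ k, N ≤ k → w k = 0 := by
  obtain ⟨N, hN⟩ := hw.bddAbove
  exact ⟨N + 1, fun k hk => by_contra fun h => by have := hN h; omega⟩

lemma IsFinSupp.diagMul {E : Type*} [NormedAddCommGroup E] [NormedSpace ℂ E] {w : ℓ²(E)}
    (hw : IsFinSupp w) (c : ℕ → ℂ) {C : ℝ} (hc : ∀ k, ‖c k‖ ≤ C) :
    IsFinSupp (lp.diagMul c hc w) :=
  hw.subset fun k hk h0 => hk (by simp [h0])

namespace IsBlockJacobi

variable {J : ℓ²(K) →ₗ.[ℂ] ℓ²(K)} {A B : ℕ → K →L[ℂ] K}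

lemma re_inner_diagMul_le (hJ : IsBlockJacobi J A B) {c : ℕ → ℝ} {C : ℝ}
    (hC : ∀ k, ‖(c k : ℂ)‖ ≤ C) {M : ℝ} (hM : 0 ≤ M)
    (hjump : ∀ k, (c (k + 1) - c k) ^ 2 * ‖A k‖ ≤ M * (c k * c (k + 1)))
    {w : ℓ²(K)} (hw : w ∈ J.domain) (hfin : IsFinSupp w) :
    let W := lp.diagMul (fun k => (c k : ℂ)) hC
    (⟪J ⟨W w, hJ.dom_fin _ (hfin.diagMul _ hC)⟩, W w⟫_ℂ).re ≤
      (⟪W (J ⟨w, hw⟩), W w⟫_ℂ).re + M * ‖W w‖ ^ 2 := by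
  intro W
  obtain ⟨N, hN⟩ := hfin.exists_forall_ge_eq_zero
  have hWw : ∀ k, W w k = (c k : ℂ) • w k := fun k => rfl
  have hWJ : ∀ k, J ⟨W w, hJ.dom_fin _ (hfin.diagMul _ hC)⟩ k =
      jacApply A B (fun k => (c k : ℂ) • w k) k :=
    hJ.apply_fin _ _ (hfin.diagMul _ hC)
  have hJw : ∀ k, W (J ⟨w, hw⟩) k = (c k : ℂ) • jacApply A B (fun k => w k) k := fun k => by
    rw [lp.diagMul_apply, hJ.apply_fin _ hw hfin]
  have hsq : ∑ k ∈ range (N + 1), (c k * ‖w k‖) ^ 2 ≤ ‖W w‖ ^ 2 := by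
    refine le_of_eq_of_le (sum_congr rfl fun k _ => ?_) (lp.sum_norm_sq_le (W w) _)
    rw [hWw, norm_smul, Complex.norm_real, Real.norm_eq_abs, mul_pow, mul_pow, sq_abs]
  rw [lp.inner_eq_tsum, lp.inner_eq_tsum]
  simp only [hWJ, hJw, hWw]
  rw [re_tsum_inner_jacApply_smul A B c (v := fun k => w k) hN]
  linarith [neg_sum_jump_re_inner_le A hM hjump (fun k => w k) N,
    mul_le_mul_of_nonneg_left hsq hM]

lemma mul_norm_diagMul_sq_le_neg_re_inner (hJ : IsBlockJacobi J A B)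
    {K₀ : ℓ²(K) →L[ℂ] ℓ²(K)} {b : ℝ}
    (hK₀ : ∀ u : J.domain, b * ‖(u : ℓ²(K))‖ ^ 2 ≤ (⟪J u - K₀ u, (u : ℓ²(K))⟫_ℂ).re)
    {c : ℕ → ℝ} {C : ℝ} (hC : ∀ k, ‖(c k : ℂ)‖ ≤ C) {M : ℝ} (hM : 0 ≤ M)
    (hjump : ∀ k, (c (k + 1) - c k) ^ 2 * ‖A k‖ ≤ M * (c k * c (k + 1)))
    {lam : ℝ} {u : J.domain} (hu : J u = (lam : ℂ) • (u : ℓ²(K))) :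
    let W := lp.diagMul (fun k => (c k : ℂ)) hC
    (b - lam - M) * ‖W u‖ ^ 2 ≤ -(⟪K₀ (W u), W u⟫_ℂ).re := by
  intro W
  -- `W u` need not lie in the domain of `J`; the estimate is passed through the graph closure
  let S := {p : ℓ²(K) × ℓ²(K) |
    b * ‖W p.1‖ ^ 2 + (⟪K₀ (W p.1), W p.1⟫_ℂ).re ≤ (⟪W p.2, W p.1⟫_ℂ).re + M * ‖W p.1‖ ^ 2}
  have hgraph :
      {p : ℓ²(K) × ℓ²(K) | ∃ h : p.1 ∈ J.domain, IsFinSupp p.1 ∧ J ⟨p.1, h⟩ = p.2} ⊆ S := by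
    rintro ⟨w, y⟩ ⟨hw, hfin, hy⟩
    dsimp only at hw hfin hy
    subst hy
    have hform := hK₀ ⟨W w, hJ.dom_fin _ (hfin.diagMul _ hC)⟩
    rw [inner_sub_left, Complex.sub_re] at hform
    show b * ‖W w‖ ^ 2 + _ ≤ _
    linarith [hJ.re_inner_diagMul_le hC hM hjump hw hfin]
  have hclosed : IsClosed S := isClosed_le (by fun_prop) (by fun_prop)
  have hu_mem : ((u : ℓ²(K)), J u) ∈ S := closure_minimal hgraph hclosed (hJ.isClosure u)
  change b * ‖W u‖ ^ 2 + _ ≤ _ at hu_mem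
  have hlam : (⟪W (J u), W u⟫_ℂ).re = lam * ‖W u‖ ^ 2 := by
    rw [hu, map_smul, inner_smul_left, Complex.conj_ofReal, Complex.re_ofReal_mul,
      inner_self_eq_norm_sq_to_K]
    norm_cast
  linarith

end IsBlockJacobi

theorem eigenvector_decay_unbounded_gap_general
    (A B : ℕ → K →L[ℂ] K)
    (J : lp (fun _ : ℕ => K) 2 →ₗ.[ℂ] lp (fun _ : ℕ => K) 2)
    (hJ : IsBlockJacobi J A B)
    (b : ℝ) (hess : EssSpecFrom J b)
    (δ : ℝ) (hδ : 0 < δ) (ε : ℝ) (hε : ε ∈ Set.Ioo (0 : ℝ) 1)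
    (lam : ℝ) (hlam : lam < b)
    (u : J.domain) (hu : J u = (lam : ℂ) • (u : lp (fun _ : ℕ => K) 2)) :
    ∃ C : ℝ, ∀ m : ℕ,
      ‖(u : lp (fun _ : ℕ => K) 2) m‖ ≤
        C * Real.exp (-(gammaFun δ ε b lam) *
            ∑ k ∈ Finset.range m, phiFun δ ‖A k‖) := by
  obtain ⟨K₀, hK₀, -, hK₀b⟩ := hess
  set F : ℕ → ℝ := fun m => gammaFun δ ε b lam * ∑ k ∈ range m, phiFun δ ‖A k‖
  have hstep : ∀ k, F (k + 1) = F k + gammaFun δ ε b lam * phiFun δ ‖A k‖ := fun k => by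
    simp only [F, sum_range_succ, mul_add]
  have hcoer : ∀ n, ε * (b - lam) * ‖truncExpWeight F n (u : ℓ²(K))‖ ^ 2 ≤
      -(⟪K₀ (truncExpWeight F n u), truncExpWeight F n u⟫_ℂ).re := fun n => by
    have h := hJ.mul_norm_diagMul_sq_le_neg_re_inner hK₀b (norm_ofReal_exp_min_le F n)
      (mul_nonneg (sub_nonneg.2 hε.2.le) (sub_nonneg.2 hlam.le))
      (fun k => sq_exp_min_sub_exp_min_mul_le hδ hε.2 hlam (norm_nonneg _) (hstep k) n) hu
    calc _ = (b - lam - (1 - ε) * (b - lam)) * ‖truncExpWeight F n (u : ℓ²(K))‖ ^ 2 := by ring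
      _ ≤ _ := h
  obtain ⟨C, hC⟩ := lp.exists_norm_le_of_compact_coercive hK₀ (mul_pos hε.1 (sub_pos.2 hlam))
    hcoer (bddAbove_norm_truncExpWeight_apply F (u : ℓ²(K)))
  exact ⟨C, fun m => by
    simpa only [F, neg_mul] using norm_apply_le_of_forall_norm_truncExpWeight_le hC m⟩

/-- **Theorem 3.3.** Decay of eigenvectors of a semi-bounded self-adjoint block Jacobi operator
corresponding to an eigenvalue `λ < b` below the essential spectrum. -/
theorem eigenvector_decay_unbounded_gap
    (A B : ℕ → K →L[ℂ] K) (hB : ∀ n, IsSelfAdjoint (B n))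
    (hkerA : ∀ m, ∀ x : K, A m x = 0 → x = 0)
    (J : lp (fun _ : ℕ => K) 2 →ₗ.[ℂ] lp (fun _ : ℕ => K) 2)
    (hJ : IsBlockJacobi J A B) (hsa : IsSelfAdjoint J)
    (hbelow : IsBoundedBelowOp J)
    (b : ℝ) (hess : EssSpecFrom J b)
    (δ : ℝ) (hδ : 0 < δ) (ε : ℝ) (hε : ε ∈ Set.Ioo (0 : ℝ) 1)
    (lam : ℝ) (hlam : lam < b)
    (u : J.domain) (hu : J u = (lam : ℂ) • (u : lp (fun _ : ℕ => K) 2))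
    (hnorm : ‖(u : lp (fun _ : ℕ => K) 2)‖ = 1) :
    ∃ C : ℝ, ∀ m : ℕ,
      ‖(u : lp (fun _ : ℕ => K) 2) m‖ ≤
        C * Real.exp (-(gammaFun δ ε b lam) *
            ∑ k ∈ Finset.range m, phiFun δ ‖A k‖) :=
  eigenvector_decay_unbounded_gap_general A B J hJ b hess δ hδ ε hε lam hlam u hu
end
end

section
/- Lemma 5.1. Let s,t > 0 and let J_c be the bounded self-adjoint block Jacobi operator on H = ℓ²(ℕ,ℂ²) with constant entries A_n = [[0,1],[1,0]] and B_n = [[s,0],[0,t]], i.e. (J_c v)₁ = B v₁ + A v₂ and (J_c v)_k = A v_{k−1} + B v_k + A v_{k+1} for k ≥ 2, where A = [[0,1],[1,0]] and B = [[s,0],[0,t]]. Then for every v ∈ H: ⟨J_c v, v⟩ ≥ c‖v‖², where c = (st−4) / ((t+s)/2 + √(((t−s)/2)² + 4)). -/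
/-!
Let `c = (s+t)/2 - √(((t-s)/2)² + 4)`, the smaller eigenvalue of `[[s,2],[2,t]]`; rationalizing
shows it equals the constant of the statement. Then `B - c = diag(p, q)` with `p, q > 0` and
`p q = 4`, and `⟨(J_c - c) v, v⟩` is a sum of two-site forms
`(⟨(B-c) v_k, v_k⟩ + ⟨(B-c) v_{k+1}, v_{k+1}⟩) / 2 + 2 Re ⟨A v_{k+1}, v_k⟩`, each nonnegative by
AM-GM because `p q ≥ 4`, plus the nonnegative boundary term `⟨(B-c) v_0, v_0⟩ / 2`.
The regrouping is done on partial sums, whose remainder vanishes because `v_k → 0`.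
-/

noncomputable section

open scoped InnerProductSpace ENNReal

def matCLM (M : Matrix (Fin 2) (Fin 2) ℂ) :
    EuclideanSpace ℂ (Fin 2) →L[ℂ] EuclideanSpace ℂ (Fin 2) :=
  LinearMap.toContinuousLinearMap (Matrix.toEuclideanLin M)

def matA : EuclideanSpace ℂ (Fin 2) →L[ℂ] EuclideanSpace ℂ (Fin 2) :=
  matCLM !![0, 1; 1, 0]

def matB (s t : ℝ) : EuclideanSpace ℂ (Fin 2) →L[ℂ] EuclideanSpace ℂ (Fin 2) :=
  matCLM !![(s : ℂ), 0; 0, (t : ℂ)]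

open Filter Topology

theorem tendsto_norm_lp_apply_zero {E : ℕ → Type*} [∀ i, NormedAddCommGroup (E i)] {p : ℝ≥0∞}
    (hp : 0 < p.toReal) (v : lp E p) : Tendsto (fun k => ‖v k‖) atTop (𝓝 0) := by
  have hpow : Tendsto (fun k => ‖v k‖ ^ p.toReal) atTop (𝓝 0) :=
    (lp.hasSum_norm hp v).summable.tendsto_atTop_zero
  have hroot : Tendsto (fun x : ℝ => x ^ p.toReal⁻¹) (𝓝 0) (𝓝 0) := by
    simpa [Real.zero_rpow (inv_ne_zero hp.ne')] using
      (Real.continuousAt_rpow_const 0 p.toReal⁻¹ (Or.inr (inv_pos.2 hp).le)).tendsto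
  refine (hroot.comp hpow).congr fun k => ?_
  simp [← Real.rpow_mul (norm_nonneg _), hp.ne']

theorem nonneg_of_hasSum_of_pair_decomp {f e γ : ℕ → ℝ} {S : ℝ} (hf : HasSum f S)
    (he₀ : 0 ≤ e 0) (hf₀ : f 0 = e 0 + γ 0) (hf_succ : ∀ k, f (k + 1) = γ k + e (k + 1) + γ (k + 1))
    (hpair : ∀ k, 0 ≤ (e k + e (k + 1)) / 2 + 2 * γ k)
    (he : Tendsto e atTop (𝓝 0)) (hγ : Tendsto γ atTop (𝓝 0)) : 0 ≤ S := by
  have partial_sum_ge : ∀ N, e N / 2 + γ N ≤ ∑ k ∈ Finset.range (N + 1), f k := by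
    intro N
    induction N with
    | zero => rw [zero_add, Finset.sum_range_one, hf₀]; linarith
    | succ N ih => rw [Finset.sum_range_succ, hf_succ]; linarith [hpair N]
  have hlim : Tendsto (fun N => e N / 2 + γ N) atTop (𝓝 0) := by
    simpa using (he.div_const 2).add hγ
  exact le_of_tendsto_of_tendsto' hlim (hf.tendsto_sum_nat.comp (tendsto_add_atTop_nat 1))
    partial_sum_ge

section JacobiForm

variable {E : Type*} [NormedAddCommGroup E] [InnerProductSpace ℂ E]

theorem re_inner_nonneg_of_jacobi {A B : E →L[ℂ] E} (hA : (A : E →ₗ[ℂ] E).IsSymmetric)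
    (hB : ∀ u, 0 ≤ (⟪B u, u⟫_ℂ).re)
    (hpair : ∀ u w, 0 ≤ ((⟪B u, u⟫_ℂ).re + (⟪B w, w⟫_ℂ).re) / 2 + 2 * (⟪A w, u⟫_ℂ).re)
    (v w : lp (fun _ : ℕ => E) 2) (h₀ : w 0 = B (v 0) + A (v 1))
    (h_succ : ∀ k, w (k + 1) = A (v k) + B (v (k + 1)) + A (v (k + 2))) :
    0 ≤ (⟪w, v⟫_ℂ).re := by
  have hv : Tendsto (fun k => v k) atTop (𝓝 0) :=
    tendsto_zero_iff_norm_tendsto_zero.2 (tendsto_norm_lp_apply_zero (by norm_num) v)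
  have hBv : Tendsto (fun k => (⟪B (v k), v k⟫_ℂ).re) atTop (𝓝 0) := by
    simpa [Function.comp_def] using (Complex.continuous_re.tendsto _).comp
      (((B.continuous.tendsto 0).comp hv).inner (𝕜 := ℂ) hv)
  have hAv : Tendsto (fun k => (⟪A (v (k + 1)), v k⟫_ℂ).re) atTop (𝓝 0) := by
    simpa [Function.comp_def] using (Complex.continuous_re.tendsto _).comp
      (((A.continuous.tendsto 0).comp (hv.comp (tendsto_add_atTop_nat 1))).inner (𝕜 := ℂ) hv)
  refine nonneg_of_hasSum_of_pair_decomp (Complex.hasSum_re (lp.hasSum_inner w v)) (hB _) ?_ ?_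
    (fun k => hpair _ _) hBv hAv
  · simp [h₀, inner_add_left]
  · intro k
    have hA' : (⟪A (v k), v (k + 1)⟫_ℂ).re = (⟪A (v (k + 1)), v k⟫_ℂ).re := by
      rw [← ContinuousLinearMap.coe_coe A, hA, ← inner_conj_symm, Complex.conj_re]
    simp [h_succ, inner_add_left, hA']

end JacobiForm

theorem isSymmetric_matA : (matA : EuclideanSpace ℂ (Fin 2) →ₗ[ℂ] _).IsSymmetric := by
  refine Matrix.isSymmetric_toEuclideanLin_iff.2 ?_
  ext i j
  fin_cases i <;> fin_cases j <;> simp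

theorem matB_sub_smul (s t c : ℝ) (u : EuclideanSpace ℂ (Fin 2)) :
    matB s t u - (c : ℂ) • u = matB (s - c) (t - c) u := by
  ext i
  fin_cases i <;> simp [matB, matCLM, dotProduct] <;> ring

theorem re_inner_matB_self (s t : ℝ) (u : EuclideanSpace ℂ (Fin 2)) :
    (⟪matB s t u, u⟫_ℂ).re = s * ‖u 0‖ ^ 2 + t * ‖u 1‖ ^ 2 := by
  simp [matB, matCLM, dotProduct, PiLp.inner_apply, Fin.sum_univ_two, Complex.sq_norm,
    Complex.normSq_apply]
  ring

theorem re_inner_matA (w u : EuclideanSpace ℂ (Fin 2)) :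
    (⟪matA w, u⟫_ℂ).re = (⟪w 1, u 0⟫_ℂ).re + (⟪w 0, u 1⟫_ℂ).re := by
  simp [matA, matCLM, dotProduct, PiLp.inner_apply, Fin.sum_univ_two]

theorem two_mul_le_of_four_le_mul {p q : ℝ} (hp : 0 < p) (hpq : 4 ≤ p * q) (x y : ℝ) :
    2 * (x * y) ≤ (p * x ^ 2 + q * y ^ 2) / 2 := by
  nlinarith [sq_nonneg (p * x - 2 * y), sq_nonneg y]

theorem pair_form_nonneg {p q : ℝ} (hp : 0 < p) (hpq : 4 ≤ p * q)
    (u w : EuclideanSpace ℂ (Fin 2)) :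
    0 ≤ ((⟪matB p q u, u⟫_ℂ).re + (⟪matB p q w, w⟫_ℂ).re) / 2 + 2 * (⟪matA w, u⟫_ℂ).re := by
  rw [re_inner_matB_self, re_inner_matB_self, re_inner_matA]
  have re_inner_ge (a b : ℂ) : -(‖a‖ * ‖b‖) ≤ (⟪a, b⟫_ℂ).re :=
    neg_le_of_abs_le ((Complex.abs_re_le_norm _).trans (norm_inner_le_norm _ _))
  have h₁ := re_inner_ge (w 1) (u 0)
  have h₂ := re_inner_ge (w 0) (u 1)
  have h₃ := two_mul_le_of_four_le_mul hp hpq ‖u 0‖ ‖w 1‖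
  have h₄ := two_mul_le_of_four_le_mul hp hpq ‖w 0‖ ‖u 1‖
  linarith

def jacobiLowerBound (s t : ℝ) : ℝ := (s + t) / 2 - √(((t - s) / 2) ^ 2 + 4)

section jacobiLowerBound

variable (s t : ℝ)

private theorem sq_sqrt_jacobi : √(((t - s) / 2) ^ 2 + 4) ^ 2 = ((t - s) / 2) ^ 2 + 4 :=
  Real.sq_sqrt (by positivity)

theorem sub_jacobiLowerBound_pos_left : 0 < s - jacobiLowerBound s t := by
  have := sq_sqrt_jacobi s t
  have := Real.sqrt_nonneg (((t - s) / 2) ^ 2 + 4)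
  rw [jacobiLowerBound]
  nlinarith

theorem sub_jacobiLowerBound_pos_right : 0 < t - jacobiLowerBound s t := by
  have := sq_sqrt_jacobi s t
  have := Real.sqrt_nonneg (((t - s) / 2) ^ 2 + 4)
  rw [jacobiLowerBound]
  nlinarith

theorem sub_jacobiLowerBound_mul :
    (s - jacobiLowerBound s t) * (t - jacobiLowerBound s t) = 4 := by
  rw [jacobiLowerBound]
  nlinarith [sq_sqrt_jacobi s t]

end jacobiLowerBound

theorem div_eq_jacobiLowerBound {s t : ℝ} (hst : 0 < s + t) :
    (s * t - 4) / ((t + s) / 2 + √(((t - s) / 2) ^ 2 + 4)) = jacobiLowerBound s t := by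
  have hden : 0 < (t + s) / 2 + √(((t - s) / 2) ^ 2 + 4) := by
    linarith [Real.sqrt_nonneg (((t - s) / 2) ^ 2 + 4)]
  rw [div_eq_iff hden.ne', jacobiLowerBound]
  nlinarith [sq_sqrt_jacobi s t]

theorem constant_block_jacobi_bounded_below_general (s t : ℝ) (hs : 0 < s) (ht : 0 < t)
    (Jc : lp (fun _ : ℕ => EuclideanSpace ℂ (Fin 2)) 2 →L[ℂ]
      lp (fun _ : ℕ => EuclideanSpace ℂ (Fin 2)) 2)
    (h0 : ∀ v : lp (fun _ : ℕ => EuclideanSpace ℂ (Fin 2)) 2,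
      (Jc v) 0 = matB s t (v 0) + matA (v 1))
    (hk : ∀ (v : lp (fun _ : ℕ => EuclideanSpace ℂ (Fin 2)) 2) (k : ℕ),
      (Jc v) (k + 1) = matA (v k) + matB s t (v (k + 1)) + matA (v (k + 2))) :
    ∀ v : lp (fun _ : ℕ => EuclideanSpace ℂ (Fin 2)) 2,
      (s * t - 4) / ((t + s) / 2 + Real.sqrt (((t - s) / 2) ^ 2 + 4)) * ‖v‖ ^ 2 ≤
        (⟪Jc v, v⟫_ℂ).re := by
  intro v
  rw [div_eq_jacobiLowerBound (by linarith)]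
  set c := jacobiLowerBound s t
  have hp := sub_jacobiLowerBound_pos_left s t
  have hq := sub_jacobiLowerBound_pos_right s t
  have hform := re_inner_nonneg_of_jacobi isSymmetric_matA
    (fun u => by rw [re_inner_matB_self]; positivity)
    (pair_form_nonneg hp (sub_jacobiLowerBound_mul s t).ge) v (Jc v - (c : ℂ) • v)
    (by simp [h0, ← matB_sub_smul]; abel) (fun k => by simp [hk, ← matB_sub_smul]; abel)
  have hshift : (⟪Jc v - (c : ℂ) • v, v⟫_ℂ).re = (⟪Jc v, v⟫_ℂ).re - c * ‖v‖ ^ 2 := by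
    simp [inner_self_eq_norm_sq_to_K, ← Complex.ofReal_pow]
  linarith

/-- **Lemma 5.1.** The block Jacobi operator `J_c` on `ℓ²(ℕ,ℂ²)` with constant entries
`A = [[0,1],[1,0]]`, `B = [[s,0],[0,t]]` (`s,t > 0`) satisfies
`⟨J_c v, v⟩ ≥ (st−4)/((t+s)/2 + √(((t−s)/2)² + 4)) · ‖v‖²`. -/
theorem constant_block_jacobi_bounded_below (s t : ℝ) (hs : 0 < s) (ht : 0 < t)
    (Jc : lp (fun _ : ℕ => EuclideanSpace ℂ (Fin 2)) 2 →L[ℂ]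
      lp (fun _ : ℕ => EuclideanSpace ℂ (Fin 2)) 2)
    (hsa : IsSelfAdjoint Jc)
    (h0 : ∀ v : lp (fun _ : ℕ => EuclideanSpace ℂ (Fin 2)) 2,
      (Jc v) 0 = matB s t (v 0) + matA (v 1))
    (hk : ∀ (v : lp (fun _ : ℕ => EuclideanSpace ℂ (Fin 2)) 2) (k : ℕ),
      (Jc v) (k + 1) = matA (v k) + matB s t (v (k + 1)) + matA (v (k + 2))) :
    ∀ v : lp (fun _ : ℕ => EuclideanSpace ℂ (Fin 2)) 2,
      (s * t - 4) / ((t + s) / 2 + Real.sqrt (((t - s) / 2) ^ 2 + 4)) * ‖v‖ ^ 2 ≤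
        (⟪Jc v, v⟫_ℂ).re :=
  constant_block_jacobi_bounded_below_general s t hs ht Jc h0 hk
end
end

section
/- Let δ > 0 and c > 0, define ψ(x) = x²e^x for x ≥ 0 and φ_δ(x) = 1/√δ for 0 ≤ x < δ and φ_δ(x) = 1/√x for x ≥ δ, and let γ ≥ 0 satisfy ψ(γ/√δ) = c/δ (i.e. γ = √δ·ψ⁻¹(c/δ)). Then for every ξ ≥ 0: ξ·ψ(γ·φ_δ(ξ)) ≤ c. -/
noncomputable section

/-!
On `[0, δ)` the argument of `ψ` is frozen at `γ/√δ`, so `ξ ψ(γ φ_δ(ξ)) = ξ c/δ ≤ c`. On `[δ, ∞)`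
the factor `ξ` cancels the square in `ψ`: `ξ ψ(γ/√ξ) = γ² e^{γ/√ξ}`, which decreases in `ξ` and
equals `δ ψ(γ/√δ) = c` at `ξ = δ`.
-/

open Real Set

theorem psiFun_nonneg (x : ℝ) : 0 ≤ psiFun x := by
  unfold psiFun
  positivity

theorem mul_psiFun_div_sqrt {t : ℝ} (γ : ℝ) (ht : 0 < t) :
    t * psiFun (γ / √t) = γ ^ 2 * exp (γ / √t) := by
  rw [psiFun, div_pow, sq_sqrt ht.le]
  field_simp

theorem antitoneOn_mul_psiFun_div_sqrt {γ : ℝ} (hγ : 0 ≤ γ) :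
    AntitoneOn (fun t => t * psiFun (γ / √t)) (Ioi 0) := by
  intro s (hs : 0 < s) t (ht : 0 < t) hst
  simp only [mul_psiFun_div_sqrt γ hs, mul_psiFun_div_sqrt γ ht]
  gcongr

theorem xi_mul_psi_gamma_phi_le_general (δ c γ : ℝ) (hδ : 0 < δ) (hγ : 0 ≤ γ)
    (hγδ : psiFun (γ / Real.sqrt δ) = c / δ) :
    ∀ ξ : ℝ, 0 ≤ ξ → ξ * psiFun (γ * phiFun δ ξ) ≤ c := by
  intro ξ hξ
  have hc : δ * psiFun (γ / √δ) = c := by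
    rw [hγδ]
    field_simp
  rcases lt_or_ge ξ δ with hξδ | hδξ
  · rw [phiFun, if_pos hξδ, mul_one_div, ← hc]
    exact mul_le_mul_of_nonneg_right hξδ.le (psiFun_nonneg _)
  · rw [phiFun, if_neg hδξ.not_gt, mul_one_div, ← hc]
    exact antitoneOn_mul_psiFun_div_sqrt hγ hδ (hδ.trans_le hδξ) hδξ

/-- If `δ, c > 0` and `γ ≥ 0` satisfies `ψ(γ/√δ) = c/δ`, then `ξ·ψ(γ·φ_δ(ξ)) ≤ c` for all
`ξ ≥ 0`. -/
theorem xi_mul_psi_gamma_phi_le (δ c γ : ℝ) (hδ : 0 < δ) (hc : 0 < c) (hγ : 0 ≤ γ)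
    (hγδ : psiFun (γ / Real.sqrt δ) = c / δ) :
    ∀ ξ : ℝ, 0 ≤ ξ → ξ * psiFun (γ * phiFun δ ξ) ≤ c :=
  xi_mul_psi_gamma_phi_le_general δ c γ hδ hγ hγδ
end
end

section
/- Let X be a bounded self-adjoint operator on a complex Hilbert space with X ≥ 0 (positive semidefinite). Then, in the Loewner (operator) order, 0 ≤ exp(X) − 2·I + exp(−X) ≤ X²·exp(X), where exp denotes the operator exponential and X²·exp(X) is self-adjoint since X commutes with exp(X). -/
open scoped InnerProductSpace

/-! Both bounds hold for the scalar function `f(t) = eᵗ - 2 + e⁻ᵗ = eᵗ (1 - e⁻ᵗ)²`,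
since `0 ≤ 1 - e⁻ᵗ ≤ t` for `t ≥ 0`. The continuous functional calculus of `X`,
whose spectrum is nonnegative, maps `f` to `exp X - 2 + exp (-X)` and `t² eᵗ` to
`X² exp X`, and it is monotone. -/

namespace Real

theorem exp_sub_two_add_exp_neg_eq (t : ℝ) :
    exp t - 2 + exp (-t) = exp t * (1 - exp (-t)) ^ 2 := by
  have h : exp t * exp (-t) = 1 := by rw [← exp_add, add_neg_cancel, exp_zero]
  linear_combination (2 - exp (-t)) * h

theorem exp_sub_two_add_exp_neg_nonneg (t : ℝ) : 0 ≤ exp t - 2 + exp (-t) := by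
  rw [exp_sub_two_add_exp_neg_eq]
  positivity

theorem exp_sub_two_add_exp_neg_le_sq_mul_exp {t : ℝ} (ht : 0 ≤ t) :
    exp t - 2 + exp (-t) ≤ t ^ 2 * exp t := by
  have h_nonneg : 0 ≤ 1 - exp (-t) := by
    linarith [exp_le_one_iff.mpr (neg_nonpos.mpr ht)]
  have h_le : 1 - exp (-t) ≤ t := by linarith [add_one_le_exp (-t)]
  rw [exp_sub_two_add_exp_neg_eq, mul_comm]
  gcongr

end Real

section CFC

variable {A : Type*} [NormedRing A] [StarRing A] [NormedAlgebra ℝ A]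
  [ContinuousFunctionalCalculus ℝ A IsSelfAdjoint] {a : A}

theorem IsSelfAdjoint.cfc_exp_sub_two_add_exp_neg (ha : IsSelfAdjoint a) :
    cfc (fun t : ℝ => Real.exp t - 2 + Real.exp (-t)) a
      = NormedSpace.exp a - 2 + NormedSpace.exp (-a) := by
  rw [cfc_add (a := a) (fun t : ℝ => Real.exp t - 2) (fun t : ℝ => Real.exp (-t)),
    cfc_sub (a := a) Real.exp (fun _ : ℝ => (2 : ℝ)), cfc_comp_neg Real.exp a,
    cfc_const 2 a, map_ofNat, CFC.real_exp_eq_normedSpace_exp ha, CFC.real_exp_eq_normedSpace_exp ha.neg]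

theorem IsSelfAdjoint.cfc_sq_mul_exp (ha : IsSelfAdjoint a) :
    cfc (fun t : ℝ => t ^ 2 * Real.exp t) a = a ^ 2 * NormedSpace.exp a := by
  rw [cfc_mul (fun t : ℝ => t ^ 2) Real.exp a, cfc_pow_id a 2, CFC.real_exp_eq_normedSpace_exp ha]

variable [PartialOrder A] [StarOrderedRing A]

theorem IsSelfAdjoint.exp_sub_two_add_exp_neg_nonneg (ha : IsSelfAdjoint a) :
    0 ≤ NormedSpace.exp a - 2 + NormedSpace.exp (-a) :=
  ha.cfc_exp_sub_two_add_exp_neg ▸ cfc_nonneg fun t _ => Real.exp_sub_two_add_exp_neg_nonneg t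

theorem exp_sub_two_add_exp_neg_le_sq_mul_exp [NonnegSpectrumClass ℝ A] (ha : 0 ≤ a) :
    NormedSpace.exp a - 2 + NormedSpace.exp (-a) ≤ a ^ 2 * NormedSpace.exp a := by
  rw [← ha.isSelfAdjoint.cfc_exp_sub_two_add_exp_neg, ← ha.isSelfAdjoint.cfc_sq_mul_exp]
  exact cfc_mono fun t ht =>
    Real.exp_sub_two_add_exp_neg_le_sq_mul_exp (spectrum_nonneg_of_nonneg ha ht)

end CFC

/-- For a bounded self-adjoint positive operator `X` on a complex Hilbert space,
`0 ≤ exp(X) − 2·I + exp(−X) ≤ X²·exp(X)` in the Loewner order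
(`S ≤ T` meaning `⟨(T−S)u,u⟩ ≥ 0` for all `u`). -/
theorem exp_sub_two_add_exp_neg_loewner_bounds
    {H : Type*} [NormedAddCommGroup H] [InnerProductSpace ℂ H] [CompleteSpace H]
    (X : H →L[ℂ] H) (hX : IsSelfAdjoint X)
    (hpos : ∀ u : H, 0 ≤ (⟪X u, u⟫_ℂ).re) :
    (∀ u : H,
      0 ≤ (⟪((NormedSpace.exp X - 2 + NormedSpace.exp (-X) : H →L[ℂ] H)) u, u⟫_ℂ).re) ∧
    (∀ u : H,
      0 ≤ (⟪((X ^ 2 * NormedSpace.exp X -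
          (NormedSpace.exp X - 2 + NormedSpace.exp (-X)) : H →L[ℂ] H)) u, u⟫_ℂ).re) := by
  have hX_nonneg : 0 ≤ X :=
    (ContinuousLinearMap.nonneg_iff_isPositive X).mpr ⟨hX.isSymmetric, hpos⟩
  have h_lower := (ContinuousLinearMap.nonneg_iff_isPositive _).mp
    hX.exp_sub_two_add_exp_neg_nonneg
  have h_upper := (ContinuousLinearMap.le_def _ _).mp
    (exp_sub_two_add_exp_neg_le_sq_mul_exp hX_nonneg)
  exact ⟨h_lower.re_inner_nonneg_left, h_upper.re_inner_nonneg_left⟩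
end
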